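/- arXiv:1405.4270 — 2 statements merged into one kernel-verified Lean document; each statement's English description precedes it below -/
import Mathlib

section
/- Fix a real α with 0 < α ≤ 1, and let λ₁,…,λₙ > 0 and θ₁,…,θₙ > 0 be positive reals such that (λ₁,…,λₙ) is majorized by (θ₁,…,θₙ). Then for every t > 0 the reverse hazard rates of the parallel systems satisfy r_{n:n}^λ(t) ≤ r_{n:n}^θ(t), where r_{n:n}^λ(t) = Σ_{i=1}^n α λᵢ^α t^{α−1} / (e^{(λᵢ t)^α} − 1); i.e., the parallel system with scale parameters λ is smaller in the reverse hazard rate order than the one with scale parameters θ. -/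
open Real Set

/-- `x` is weakly majorized (from below) by `y`: for every `j`, the sum of the `j`
smallest components of `x` is at least the sum of the `j` smallest components of `y`.
Equivalently: for every subset `s` of indices there is a subset `u` of the same
cardinality with `∑_{i ∈ u} y i ≤ ∑_{i ∈ s} x i`. -/
def WeaklyMajorizedBy {n : ℕ} (x y : Fin n → ℝ) : Prop :=
  ∀ s : Finset (Fin n), ∃ u : Finset (Fin n),
    u.card = s.card ∧ ∑ i ∈ u, y i ≤ ∑ i ∈ s, x i

/-- `x` is majorized by `y`: the partial sums of the `j` smallest components of `x`
dominate those of `y`, and the total sums agree. -/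
def MajorizedBy {n : ℕ} (x y : Fin n → ℝ) : Prop :=
  WeaklyMajorizedBy x y ∧ ∑ i, x i = ∑ i, y i


/-!
For fixed `t > 0` the summand is `x ↦ (α / t) · h ((x t) ^ α)` with `h u = u / (eᵘ - 1)`.
On `(0, ∞)` the function `h` is decreasing and convex (`h''` has the sign of
`(u - 2) eᵘ + u + 2 ≥ 0`), and `x ↦ (x t) ^ α` is concave because `α ≤ 1`, so the summand `φ` is
a convex function of the scale parameter. The theorem is then Karamata's inequality. To prove it,
sort both vectors increasingly and let `cᵢ` be the right derivative of `φ` at `λ₍ᵢ₎`. The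
supporting lines give `∑ φ(θ) - ∑ φ(λ) ≥ ∑ cᵢ (θ₍ᵢ₎ - λ₍ᵢ₎)`, and Abel summation shows that this is
nonnegative: `c` is increasing, and by majorization the partial sums of `θ₍ᵢ₎ - λ₍ᵢ₎` are
nonpositive and their total is zero.
-/

lemma Real.one_sub_mul_exp_le_one (u : ℝ) : (1 - u) * exp u ≤ 1 := by
  have h := mul_le_mul_of_nonneg_right (one_sub_le_exp_neg u) (exp_pos u).le
  rwa [← exp_add, neg_add_cancel, exp_zero] at h

lemma Real.two_sub_mul_exp_le_two_add {u : ℝ} (hu : 0 ≤ u) : (2 - u) * exp u ≤ 2 + u := by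
  have hderiv (v : ℝ) :
      HasDerivAt (fun w => (w - 2) * exp w + w + 2) ((v - 1) * exp v + 1) v :=
    ((((hasDerivAt_id' v).sub_const 2).mul (hasDerivAt_exp v)).add (hasDerivAt_id' v)).add_const 2
      |>.congr_deriv (by ring)
  have hmono := monotone_of_hasDerivAt_nonneg hderiv fun v => by
    simp only [Pi.zero_apply]
    linarith [one_sub_mul_exp_le_one v]
  have h := hmono hu
  simp only [zero_sub, exp_zero] at h
  linarith

lemma Real.hasDerivAt_div_exp_sub_one {u : ℝ} (hu : u ≠ 0) :
    HasDerivAt (fun v => v / (exp v - 1)) ((exp u - 1 - u * exp u) / (exp u - 1) ^ 2) u := by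
  have hne : exp u - 1 ≠ 0 := sub_ne_zero.2 (by rwa [Ne, exp_eq_one_iff])
  refine (hasDerivAt_id' u).div ((hasDerivAt_exp u).sub_const 1) hne |>.congr_deriv ?_
  ring

lemma Real.hasDerivAt_deriv_div_exp_sub_one {u : ℝ} (hu : u ≠ 0) :
    HasDerivAt (fun v => (exp v - 1 - v * exp v) / (exp v - 1) ^ 2)
      (exp u * ((u - 2) * exp u + u + 2) / (exp u - 1) ^ 3) u := by
  have hne : exp u - 1 ≠ 0 := sub_ne_zero.2 (by rwa [Ne, exp_eq_one_iff])
  have hnum : HasDerivAt (fun v => exp v - 1 - v * exp v) (-(u * exp u)) u :=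
    ((hasDerivAt_exp u).sub_const 1).sub ((hasDerivAt_id' u).mul (hasDerivAt_exp u))
      |>.congr_deriv (by ring)
  have hden : HasDerivAt (fun v => (exp v - 1) ^ 2) (2 * (exp u - 1) * exp u) u :=
    ((hasDerivAt_exp u).sub_const 1).pow 2 |>.congr_deriv (by ring)
  refine hnum.div hden (pow_ne_zero 2 hne) |>.congr_deriv ?_
  field_simp
  ring

lemma Real.antitoneOn_div_exp_sub_one : AntitoneOn (fun u => u / (exp u - 1)) (Ioi 0) := by
  refine antitoneOn_of_hasDerivWithinAt_nonpos (convex_Ioi 0)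
    (fun u hu => (hasDerivAt_div_exp_sub_one (ne_of_gt hu)).continuousAt.continuousWithinAt)
    (fun u hu => (hasDerivAt_div_exp_sub_one (ne_of_gt (interior_subset hu))).hasDerivWithinAt)
    (fun u _ => div_nonpos_of_nonpos_of_nonneg ?_ (sq_nonneg _))
  nlinarith [one_sub_mul_exp_le_one u]

lemma Real.convexOn_div_exp_sub_one : ConvexOn ℝ (Ioi 0) (fun u => u / (exp u - 1)) := by
  refine convexOn_of_hasDerivWithinAt2_nonneg (convex_Ioi 0)
    (fun u hu => (hasDerivAt_div_exp_sub_one (ne_of_gt hu)).continuousAt.continuousWithinAt)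
    (fun u hu => (hasDerivAt_div_exp_sub_one (ne_of_gt (interior_subset hu))).hasDerivWithinAt)
    (fun u hu =>
      (hasDerivAt_deriv_div_exp_sub_one (ne_of_gt (interior_subset hu))).hasDerivWithinAt)
    (fun u hu => ?_)
  have hu : 0 < u := interior_subset hu
  have hψ : 0 ≤ (u - 2) * exp u + u + 2 := by linarith [two_sub_mul_exp_le_two_add hu.le]
  have hden : 0 < exp u - 1 := sub_pos.2 (one_lt_exp_iff.2 hu)
  positivity

lemma ConvexOn.comp_concaveOn_of_mapsTo {E : Type*} [AddCommGroup E] [Module ℝ E] {s : Set E}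
    {t : Set ℝ} {f : E → ℝ} {g : ℝ → ℝ} (hg : ConvexOn ℝ t g) (hf : ConcaveOn ℝ s f)
    (hg' : AntitoneOn g t) (hst : MapsTo f s t) : ConvexOn ℝ s (g ∘ f) := by
  refine ⟨hf.1, fun x hx y hy a b ha hb hab => ?_⟩
  calc g (f (a • x + b • y)) ≤ g (a • f x + b • f y) :=
        hg' (hg.1 (hst hx) (hst hy) ha hb hab) (hst (hf.1 hx hy ha hb hab))
          (hf.2 hx hy ha hb hab)
    _ ≤ a • g (f x) + b • g (f y) := hg.2 (hst hx) (hst hy) ha hb hab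

lemma convexOn_weibull_reverse_hazard {α t : ℝ} (hα : 0 < α) (hα1 : α ≤ 1) (ht : 0 < t) :
    ConvexOn ℝ (Ioi 0) fun x => α * x ^ α * t ^ (α - 1) / (exp ((x * t) ^ α) - 1) := by
  have hinner : ConcaveOn ℝ (Ioi 0) fun x : ℝ => (x * t) ^ α :=
    ((concaveOn_rpow hα.le hα1).subset Ioi_subset_Ici_self (convex_Ioi 0)).smul
      (rpow_nonneg ht.le α) |>.congr fun x hx => by
        simp only [smul_eq_mul, mul_rpow (le_of_lt hx) ht.le, mul_comm (t ^ α)]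
  have hmaps : MapsTo (fun x : ℝ => (x * t) ^ α) (Ioi 0) (Ioi 0) :=
    fun x hx => rpow_pos_of_pos (mul_pos hx ht) α
  refine ((convexOn_div_exp_sub_one.comp_concaveOn_of_mapsTo hinner antitoneOn_div_exp_sub_one
    hmaps).smul (div_pos hα ht).le).congr fun x hx => ?_
  simp only [Function.comp, smul_eq_mul, mul_rpow (le_of_lt hx) ht.le, rpow_sub_one ht.ne']
  field_simp

lemma ConvexOn.add_rightDeriv_mul_sub_le {S : Set ℝ} {f : ℝ → ℝ} {x y : ℝ} (hf : ConvexOn ℝ S f)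
    (hx : x ∈ interior S) (hy : y ∈ S) : f x + derivWithin f (Ioi x) x * (y - x) ≤ f y := by
  rcases lt_trichotomy x y with hxy | rfl | hyx
  · have h := hf.rightDeriv_le_slope_of_mem_interior hx hy hxy
    rw [slope_def_field, le_div_iff₀ (sub_pos.2 hxy)] at h
    linarith
  · simp
  · have h := (hf.slope_le_leftDeriv_of_mem_interior hy hx hyx).trans
      (hf.leftDeriv_le_rightDeriv_of_mem_interior hx)
    rw [slope_def_field, div_le_iff₀ (sub_pos.2 hyx)] at h
    linarith

lemma Fin.val_le_of_strictMono {k n : ℕ} {f : Fin k → Fin n} (hf : StrictMono f) (i : Fin k) :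
    (i : ℕ) ≤ f i :=
  calc (i : ℕ) = (Finset.Iio i).card := (Fin.card_Iio i).symm
    _ ≤ (Finset.Iio (f i)).card :=
        Finset.card_le_card_of_injOn f (fun j hj => by simpa using hf (by simpa using hj))
          hf.injective.injOn
    _ = f i := Fin.card_Iio (f i)

theorem Monotone.prefix_sum_le_sum_of_card_eq {M : Type*} [AddCommMonoid M] [PartialOrder M]
    [IsOrderedAddMonoid M] {n k : ℕ} {g : Fin n → M} (hg : Monotone g) (hk : k ≤ n)
    {v : Finset (Fin n)} (hv : v.card = k) :
    ∑ i : Fin k, g (Fin.castLE hk i) ≤ ∑ i ∈ v, g i :=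
  calc ∑ i : Fin k, g (Fin.castLE hk i) ≤ ∑ i : Fin k, g (v.orderEmbOfFin hv i) :=
        Finset.sum_le_sum fun i _ =>
          hg (Fin.val_le_of_strictMono (v.orderEmbOfFin hv).strictMono i)
    _ = ∑ i ∈ Finset.univ.image (v.orderEmbOfFin hv), g i :=
        (Finset.sum_image fun _ _ _ _ h => (v.orderEmbOfFin hv).injective h).symm
    _ = ∑ i ∈ v, g i := by rw [v.image_orderEmbOfFin_univ hv]

theorem Monotone.mul_sum_le_sum_mul {n : ℕ} {c d : Fin n → ℝ} (hc : Monotone c)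
    (hd : ∀ k (hk : k ≤ n), ∑ i : Fin k, d (Fin.castLE hk i) ≤ 0) {M : ℝ} (hM : ∀ i, c i ≤ M) :
    M * ∑ i, d i ≤ ∑ i, c i * d i := by
  induction n generalizing M with
  | zero => simp
  | succ n ih =>
    have hsum : ∑ i, d i ≤ 0 := by simpa using hd (n + 1) le_rfl
    have hinitial := ih (c := c ∘ Fin.castSucc) (d := d ∘ Fin.castSucc)
      (hc.comp Fin.strictMono_castSucc.monotone) (fun k hk => hd k (hk.trans n.le_succ))
      (fun i => hc (Fin.le_last i.castSucc))
    calc M * ∑ i, d i ≤ c (Fin.last n) * ∑ i, d i := mul_le_mul_of_nonpos_right (hM _) hsum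
      _ = c (Fin.last n) * ∑ i : Fin n, d i.castSucc + c (Fin.last n) * d (Fin.last n) := by
        rw [Fin.sum_univ_castSucc, mul_add]
      _ ≤ ∑ i : Fin n, c i.castSucc * d i.castSucc + c (Fin.last n) * d (Fin.last n) := by
        gcongr
        exact hinitial
      _ = ∑ i, c i * d i := (Fin.sum_univ_castSucc fun i => c i * d i).symm

theorem ConvexOn.sum_le_sum_of_prefix_sum_le {S : Set ℝ} {φ : ℝ → ℝ} (hφ : ConvexOn ℝ S φ)
    {n : ℕ} {x y : Fin n → ℝ} (hx : ∀ i, x i ∈ interior S) (hy : ∀ i, y i ∈ S)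
    (hxm : Monotone x)
    (hpre : ∀ k (hk : k ≤ n), ∑ i : Fin k, y (Fin.castLE hk i) ≤ ∑ i : Fin k, x (Fin.castLE hk i))
    (htot : ∑ i, x i = ∑ i, y i) :
    ∑ i, φ (x i) ≤ ∑ i, φ (y i) := by
  set c := fun i => derivWithin φ (Ioi (x i)) (x i)
  have hc : Monotone c := fun i j hij => hφ.monotoneOn_rightDeriv (hx i) (hx j) (hxm hij)
  obtain ⟨M, hM⟩ := (Set.finite_range c).bddAbove
  have habel : 0 ≤ ∑ i, c i * (y i - x i) := by
    have h := hc.mul_sum_le_sum_mul (d := fun i => y i - x i)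
      (fun k hk => by simpa [Finset.sum_sub_distrib] using hpre k hk) (fun i => hM ⟨i, rfl⟩)
    simpa [Finset.sum_sub_distrib, htot] using h
  calc ∑ i, φ (x i) ≤ ∑ i, (φ (x i) + c i * (y i - x i)) := by
        rw [Finset.sum_add_distrib]
        linarith
    _ ≤ ∑ i, φ (y i) :=
        Finset.sum_le_sum fun i _ => hφ.add_rightDeriv_mul_sub_le (hx i) (hy i)

theorem WeaklyMajorizedBy.prefix_sum_sort_le {n : ℕ} {x y : Fin n → ℝ}
    (h : WeaklyMajorizedBy x y) (k : ℕ) (hk : k ≤ n) :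
    ∑ i : Fin k, (y ∘ Tuple.sort y) (Fin.castLE hk i) ≤
      ∑ i : Fin k, (x ∘ Tuple.sort x) (Fin.castLE hk i) := by
  set σ := Tuple.sort x
  set τ := Tuple.sort y
  obtain ⟨u, hu, hsum⟩ := h ((Finset.univ.map (Fin.castLEEmb hk)).map σ.toEmbedding)
  rw [Finset.card_map, Finset.card_map, Finset.card_univ, Fintype.card_fin] at hu
  calc ∑ i : Fin k, (y ∘ τ) (Fin.castLE hk i) ≤ ∑ i ∈ u.map τ.symm.toEmbedding, (y ∘ τ) i :=
        (Tuple.monotone_sort y).prefix_sum_le_sum_of_card_eq hk (by rw [Finset.card_map, hu])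
    _ = ∑ i ∈ u, y i := by simp [Finset.sum_map]
    _ ≤ _ := hsum
    _ = _ := by simp [Finset.sum_map]

theorem MajorizedBy.sum_le_sum_of_convexOn {S : Set ℝ} {φ : ℝ → ℝ} {n : ℕ} {x y : Fin n → ℝ}
    (h : MajorizedBy x y) (hφ : ConvexOn ℝ S φ) (hx : ∀ i, x i ∈ interior S)
    (hy : ∀ i, y i ∈ S) :
    ∑ i, φ (x i) ≤ ∑ i, φ (y i) := by
  obtain ⟨hweak, htot⟩ := h
  rw [← Equiv.sum_comp (Tuple.sort x) (fun i => φ (x i)),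
    ← Equiv.sum_comp (Tuple.sort y) (fun i => φ (y i))]
  refine hφ.sum_le_sum_of_prefix_sum_le (x := x ∘ Tuple.sort x) (y := y ∘ Tuple.sort y)
    (fun i => hx _) (fun i => hy _) (Tuple.monotone_sort x) hweak.prefix_sum_sort_le ?_
  simp only [Function.comp, Equiv.sum_comp, htot]

/-- If `(λ₁,…,λₙ) ≼^m (θ₁,…,θₙ)` and `0 < α ≤ 1`, then for every `t > 0` the reverse
hazard rate of the parallel Weibull system with scale parameters `λ` is at most that of
the system with scale parameters `θ`, i.e. `X_{n:n}^λ ≤_rh X_{n:n}^θ`. -/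
theorem parallel_weibull_rh_order_majorization
    {n : ℕ} (α : ℝ) (hα : 0 < α) (hα1 : α ≤ 1)
    (lam θ : Fin n → ℝ) (hlam : ∀ i, 0 < lam i) (hθ : ∀ i, 0 < θ i)
    (hmaj : MajorizedBy lam θ) :
    ∀ t : ℝ, 0 < t →
      ∑ i, α * lam i ^ α * t ^ (α - 1) / (exp ((lam i * t) ^ α) - 1) ≤
        ∑ i, α * θ i ^ α * t ^ (α - 1) / (exp ((θ i * t) ^ α) - 1) := fun _ ht =>
  hmaj.sum_le_sum_of_convexOn (convexOn_weibull_reverse_hazard hα hα1 ht)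
    (fun i => by rw [interior_Ioi]; exact hlam i) hθ
end

section
/- Fix a real α > 0 and positive reals λ, λ₁, λ₁* such that λ₁* = min(λ, λ₁, λ₁*) and (λ₁, λ) is weakly majorized by (λ₁*, λ) (so that either λ₁* ≤ λ ≤ λ₁ or λ₁* ≤ λ₁ ≤ λ). Then the ratio of reverse hazard rates r_{2:2}*(t) / r_{2:2}(t) = [u(λ₁* t) + u(λ t)] / [u(λ₁ t) + u(λ t)], where u(s) = s^α / (e^{s^α} − 1), is increasing in t on (0, ∞). -/
/-!
With `f x = x / (eˣ - 1)` we have `u (λ t) = f (λ^α t^α)`, so it suffices that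
`(f (a x) + f (c x)) / (f (b x) + f (c x))` increases in `x > 0` whenever `a ≤ b` and `a ≤ c`.
Since `1 / f` is the slope of the secant of `exp` through `0`, convexity makes `f` decreasing on
`ℝ ∖ {0}`, and `x f'(x) = f(x) (1 - f(-x))`. Multiplying the derivative of the ratio by `x` times
the squared denominator leaves an expression that splits into three nonnegative products, because
`f (b x) ≤ f (a x)` while `f (-a x)` is below both `f (-b x)` and `f (-c x)`.
-/

open Real Set

noncomputable def divExpSubOne (x : ℝ) : ℝ := x / (exp x - 1)

lemma exp_sub_one_div_pos {x : ℝ} (hx : x ≠ 0) : 0 < (exp x - 1) / x := by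
  rcases hx.lt_or_gt with hneg | hpos
  · exact div_pos_of_neg_of_neg (by linarith [Real.exp_lt_one_iff.mpr hneg]) hneg
  · exact div_pos (by linarith [Real.one_lt_exp_iff.mpr hpos]) hpos

lemma divExpSubOne_eq_inv (x : ℝ) : divExpSubOne x = ((exp x - 1) / x)⁻¹ :=
  (inv_div _ _).symm

lemma divExpSubOne_pos {x : ℝ} (hx : x ≠ 0) : 0 < divExpSubOne x := by
  rw [divExpSubOne_eq_inv]
  exact inv_pos.mpr (exp_sub_one_div_pos hx)

lemma antitoneOn_divExpSubOne : AntitoneOn divExpSubOne {0}ᶜ := by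
  intro x hx y hy hxy
  have hslope : (exp x - 1) / x ≤ (exp y - 1) / y := by
    simpa only [exp_zero, sub_zero] using
      convexOn_exp.secant_mono (a := 0) (mem_univ _) (mem_univ _) (mem_univ _) hx hy hxy
  rw [divExpSubOne_eq_inv, divExpSubOne_eq_inv]
  exact inv_anti₀ (exp_sub_one_div_pos hx) hslope

lemma divExpSubOne_neg (x : ℝ) : divExpSubOne (-x) = x * exp x / (exp x - 1) := by
  have hexp : exp (-x) - 1 = -((exp x - 1) / exp x) := by
    rw [exp_neg]; field_simp; ring
  rw [divExpSubOne, hexp, neg_div_neg_eq, div_div_eq_mul_div]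

lemma hasDerivAt_divExpSubOne {x : ℝ} (hx : x ≠ 0) :
    HasDerivAt divExpSubOne (divExpSubOne x * (1 - divExpSubOne (-x)) / x) x := by
  have hne : exp x - 1 ≠ 0 := fun h => (exp_sub_one_div_pos hx).ne' (by simp [h])
  refine ((hasDerivAt_id x).div ((hasDerivAt_exp x).sub_const 1) hne).congr_deriv ?_
  rw [divExpSubOne_neg, divExpSubOne, id_eq]
  field_simp

lemma hasDerivAt_divExpSubOne_comp_mul {c x : ℝ} (hcx : c * x ≠ 0) :
    HasDerivAt (fun y => divExpSubOne (c * y))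
      (divExpSubOne (c * x) * (1 - divExpSubOne (-(c * x))) / x) x := by
  have h := (hasDerivAt_divExpSubOne hcx).comp x ((hasDerivAt_id x).const_mul c)
  refine h.congr_deriv ?_
  have hc : c ≠ 0 := left_ne_zero_of_mul hcx
  field_simp

lemma mul_add_sub_mul_add_nonneg {p q r a b c : ℝ} (hq : 0 ≤ q) (hr : 0 ≤ r) (hqp : q ≤ p)
    (hab : a ≤ b) (hac : a ≤ c) :
    0 ≤ (p + r) * (b * q + c * r) - (a * p + c * r) * (q + r) := by
  have hp : 0 ≤ p := hq.trans hqp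
  have expand : (p + r) * (b * q + c * r) - (a * p + c * r) * (q + r) =
      p * q * (b - a) + r * (p - q) * (c - a) + r * q * (b - a) := by ring
  rw [expand]
  have hba := sub_nonneg.mpr hab
  have hca := sub_nonneg.mpr hac
  have hpq := sub_nonneg.mpr hqp
  positivity

lemma monotoneOn_divExpSubOne_ratio {a b c : ℝ} (ha : 0 < a) (hab : a ≤ b) (hac : a ≤ c) :
    MonotoneOn
      (fun x => (divExpSubOne (a * x) + divExpSubOne (c * x)) /
        (divExpSubOne (b * x) + divExpSubOne (c * x)))
      (Ioi 0) := by
  have hb : 0 < b := ha.trans_le hab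
  have hc : 0 < c := ha.trans_le hac
  set f := divExpSubOne
  have hderiv : ∀ x ∈ Ioi (0 : ℝ), HasDerivAt
      (fun x => (f (a * x) + f (c * x)) / (f (b * x) + f (c * x)))
      (((f (a * x) * (1 - f (-(a * x))) / x + f (c * x) * (1 - f (-(c * x))) / x) *
          (f (b * x) + f (c * x)) - (f (a * x) + f (c * x)) *
          (f (b * x) * (1 - f (-(b * x))) / x + f (c * x) * (1 - f (-(c * x))) / x)) /
        (f (b * x) + f (c * x)) ^ 2) x := by
    intro x (hx : 0 < x)
    have hden : f (b * x) + f (c * x) ≠ 0 :=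
      (add_pos (divExpSubOne_pos (by positivity)) (divExpSubOne_pos (by positivity))).ne'
    exact ((hasDerivAt_divExpSubOne_comp_mul (by positivity)).add
      (hasDerivAt_divExpSubOne_comp_mul (by positivity))).div
      ((hasDerivAt_divExpSubOne_comp_mul (by positivity)).add
      (hasDerivAt_divExpSubOne_comp_mul (by positivity))) hden
  refine monotoneOn_of_deriv_nonneg (convex_Ioi 0)
    (fun x hx => (hderiv x hx).continuousAt.continuousWithinAt)
    (fun x hx => (hderiv x (interior_subset hx)).differentiableAt.differentiableWithinAt) ?_
  rw [interior_Ioi]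
  intro x (hx : 0 < x)
  rw [(hderiv x hx).deriv]
  have hax : 0 < a * x := by positivity
  have hq : 0 ≤ f (b * x) := (divExpSubOne_pos (by positivity)).le
  have hr : 0 ≤ f (c * x) := (divExpSubOne_pos (by positivity)).le
  have hqp : f (b * x) ≤ f (a * x) :=
    antitoneOn_divExpSubOne hax.ne' (by positivity : b * x ≠ 0) (by gcongr)
  have hneg {y : ℝ} (hy : a ≤ y) : f (-(a * x)) ≤ f (-(y * x)) :=
    antitoneOn_divExpSubOne (neg_ne_zero.mpr (mul_pos (ha.trans_le hy) hx).ne')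
      (neg_ne_zero.mpr hax.ne') (by gcongr)
  have key := mul_add_sub_mul_add_nonneg hq hr hqp (hneg hab) (hneg hac)
  refine div_nonneg ?_ (sq_nonneg _)
  convert div_nonneg key hx.le using 1
  field_simp
  ring

theorem parallel_weibull_rhr_ratio_monotone_weak_maj_general
    (α lam lam₁ lam₁s : ℝ) (hα : 0 < α)
    (hlam : 0 < lam) (hlam₁ : 0 < lam₁) (hlam₁s : 0 < lam₁s)
    (hmin : lam₁s = min lam (min lam₁ lam₁s)) :
    MonotoneOn
      (fun t : ℝ =>
        ((lam₁s * t) ^ α / (exp ((lam₁s * t) ^ α) - 1) +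
            (lam * t) ^ α / (exp ((lam * t) ^ α) - 1)) /
          ((lam₁ * t) ^ α / (exp ((lam₁ * t) ^ α) - 1) +
            (lam * t) ^ α / (exp ((lam * t) ^ α) - 1)))
      (Ioi (0 : ℝ)) := by
  have hle_lam : lam₁s ≤ lam := hmin.le.trans (min_le_left _ _)
  have hle_lam₁ : lam₁s ≤ lam₁ := hmin.le.trans ((min_le_right _ _).trans (min_le_left _ _))
  have hratio := monotoneOn_divExpSubOne_ratio (rpow_pos_of_pos hlam₁s α)
    (rpow_le_rpow hlam₁s.le hle_lam₁ hα.le) (rpow_le_rpow hlam₁s.le hle_lam hα.le)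
  have hpow : MonotoneOn (fun t : ℝ => t ^ α) (Ioi 0) :=
    (monotoneOn_rpow_Ici_of_exponent_nonneg hα.le).mono Ioi_subset_Ici_self
  refine (hratio.comp hpow fun t (ht : 0 < t) => rpow_pos_of_pos ht α).congr fun t (ht : 0 < t) => ?_
  simp only [Function.comp_apply, divExpSubOne, ← mul_rpow hlam₁s.le ht.le,
    ← mul_rpow hlam₁.le ht.le, ← mul_rpow hlam.le ht.le]

/-- For any `α > 0`, if `λ₁* = min(λ, λ₁, λ₁*)` and `(λ₁, λ) ≼^w (λ₁*, λ)`
(i.e. `min(λ₁, λ) ≥ min(λ₁*, λ)` and `λ₁ + λ ≥ λ₁* + λ`), then the ratio of reverse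
hazard rates `r_{2:2}*(t) / r_{2:2}(t) = [u(λ₁* t) + u(λ t)] / [u(λ₁ t) + u(λ t)]`,
with `u(s) = s^α / (e^{s^α} − 1)`, is increasing in `t` on `(0, ∞)`. -/
theorem parallel_weibull_rhr_ratio_monotone_weak_maj
    (α lam lam₁ lam₁s : ℝ) (hα : 0 < α)
    (hlam : 0 < lam) (hlam₁ : 0 < lam₁) (hlam₁s : 0 < lam₁s)
    (hmin : lam₁s = min lam (min lam₁ lam₁s))
    (hwmaj : min lam₁s lam ≤ min lam₁ lam ∧ lam₁s + lam ≤ lam₁ + lam) :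
    MonotoneOn
      (fun t : ℝ =>
        ((lam₁s * t) ^ α / (exp ((lam₁s * t) ^ α) - 1) +
            (lam * t) ^ α / (exp ((lam * t) ^ α) - 1)) /
          ((lam₁ * t) ^ α / (exp ((lam₁ * t) ^ α) - 1) +
            (lam * t) ^ α / (exp ((lam * t) ^ α) - 1)))
      (Ioi (0 : ℝ)) :=
  parallel_weibull_rhr_ratio_monotone_weak_maj_general α lam lam₁ lam₁s hα hlam hlam₁ hlam₁s hmin
end
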